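/- arXiv:1801.07922 — 4 statements merged into one kernel-verified Lean document; each statement's English description precedes it below -/
import Mathlib

section
/- Let P_r and Q_r be two projectors on ℝ^d with equal kernels, Ker(P_r) = Ker(Q_r). Then the σ-algebras they generate coincide: σ(P_r) = σ(Q_r), i.e., the comap of the Borel σ-algebra of ℝ^d under P_r equals the comap of the Borel σ-algebra under Q_r. -/
open Matrix

/- If `P` is idempotent then `x - P x ∈ ker P ⊆ ker Q`, so `Q = Q ∘ P`; as `Q` is continuous,
`σ(Q) ⊆ σ(P)`, and the reverse inclusion follows by symmetry. -/

theorem LinearMap.apply_apply_eq_of_ker_le {R M N : Type*} [Ring R] [AddCommGroup M] [Module R M]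
    [AddCommGroup N] [Module R N] {f : M →ₗ[R] M} {g : M →ₗ[R] N} (hf : IsIdempotentElem f)
    (hker : LinearMap.ker f ≤ LinearMap.ker g) (x : M) : g (f x) = g x := by
  have hx : x - f x ∈ LinearMap.ker f := by
    rw [LinearMap.mem_ker, map_sub, ← Module.End.mul_apply, hf.eq, sub_self]
  have := hker hx
  rwa [LinearMap.mem_ker, map_sub, sub_eq_zero, eq_comm] at this

theorem Matrix.comap_mulVec_le_of_ker_le {n : Type*} [Fintype n] [DecidableEq n]
    {A B : Matrix n n ℝ} (hA : A * A = A)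
    (hker : LinearMap.ker A.mulVecLin ≤ LinearMap.ker B.mulVecLin) :
    MeasurableSpace.comap (fun x => B.mulVec x) (borel (n → ℝ)) ≤
      MeasurableSpace.comap (fun x => A.mulVec x) (borel (n → ℝ)) := by
  have hA' : IsIdempotentElem A.mulVecLin := by
    rw [IsIdempotentElem, Module.End.mul_eq_comp, ← Matrix.mulVecLin_mul, hA]
  rw [← BorelSpace.measurable_eq]
  exact MeasurableSpace.comap_le_comap_of_eq_comp _
    B.mulVecLin.continuous_of_finiteDimensional.measurable
    (funext fun x => (LinearMap.apply_apply_eq_of_ker_le hA' hker x).symm)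

/-- Two projectors on ℝ^d with equal kernels generate the same σ-algebra: the comap of
the Borel σ-algebra of ℝ^d under `P` equals the comap of the Borel σ-algebra under `Q`. -/
theorem sigma_algebra_eq_of_ker_eq (d : ℕ)
    (P Q : Matrix (Fin d) (Fin d) ℝ)
    (hP : P * P = P) (hQ : Q * Q = Q)
    (hker : LinearMap.ker P.mulVecLin = LinearMap.ker Q.mulVecLin) :
    MeasurableSpace.comap (fun x => P.mulVec x) (borel (Fin d → ℝ)) =
      MeasurableSpace.comap (fun x => Q.mulVec x) (borel (Fin d → ℝ)) :=
  le_antisymm (comap_mulVec_le_of_ker_le hQ hker.ge) (comap_mulVec_le_of_ker_le hP hker.le)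
end

section
/- Let μ = N(m,Σ) be a Gaussian measure on ℝ^d with non-singular covariance Σ, let X and Y be independent random vectors each distributed according to μ, and let P_r be a Σ^{-1}-orthogonal projector. Then the random vector Z = P_r X + (I−P_r) Y is also distributed according to μ = N(m,Σ). -/
open MeasureTheory Matrix
open scoped ProbabilityTheory ENNReal

/-!
Let `f` be the Gaussian density, so that `(X, Y)` has density `f x * f y` on `ℝ^d × ℝ^d`, and let
`T (x, y) = (P x + (1 - P) y, (1 - P) x + P y)`. Since `P` is idempotent, `T` is a linear
involution, so it preserves Lebesgue measure. Since `P` is `Σ⁻¹`-orthogonal, the cross terms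
vanish when the quadratic forms of the two components of `T (x - m, y - m)` are expanded, so
`f ⊗ f` is `T`-invariant. Hence `T (X, Y)` has the same law as `(X, Y)`, and `Z` is its first
component.
-/

/-- The Gaussian measure `N(m, Σ)` on ℝ^d with non-singular covariance `Σ`,
defined through its Lebesgue density. -/
noncomputable def gaussian (d : ℕ) (m : Fin d → ℝ) (S : Matrix (Fin d) (Fin d) ℝ) :
    Measure (Fin d → ℝ) :=
  volume.withDensity fun x =>
    ENNReal.ofReal ((Real.sqrt ((2 * Real.pi) ^ d * S.det))⁻¹ *
      Real.exp (-(1 / 2) * ((x - m) ⬝ᵥ S⁻¹.mulVec (x - m))))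

namespace LinearMap

variable {R M : Type*} [Semiring R] [AddCommGroup M] [Module R M]

def projectorMix (p : M →ₗ[R] M) : M × M →ₗ[R] M × M :=
  (p.coprod (1 - p)).prod ((1 - p).coprod p)

@[simp]
theorem projectorMix_apply (p : M →ₗ[R] M) (z : M × M) :
    projectorMix p z = (p z.1 + (1 - p) z.2, (1 - p) z.1 + p z.2) := rfl

theorem projectorMix_diag (p : M →ₗ[R] M) (x : M) : projectorMix p (x, x) = (x, x) := by
  simp only [projectorMix_apply, sub_apply, Module.End.one_apply, add_sub_cancel, sub_add_cancel]

theorem projectorMix_involutive {p : M →ₗ[R] M} (hp : IsIdempotentElem p) :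
    Function.Involutive (projectorMix p) := by
  have hpp (x : M) : p (p x) = p x := congr($hp.eq x)
  have hpq (x : M) : p ((1 - p) x) = 0 := congr($hp.mul_one_sub_self x)
  have hqp (x : M) : (1 - p) (p x) = 0 := congr($hp.one_sub_mul_self x)
  have hqq (x : M) : (1 - p) ((1 - p) x) = (1 - p) x := congr($hp.one_sub.eq x)
  have hsplit (x : M) : p x + (1 - p) x = x := by
    rw [sub_apply, Module.End.one_apply, add_sub_cancel]
  have hsplit' (x : M) : (1 - p) x + p x = x := by rw [add_comm, hsplit]
  rintro ⟨x, y⟩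
  simp only [projectorMix_apply, map_add, hpp, hpq, hqp, hqq, add_zero, zero_add, hsplit,
    hsplit']

theorem map_addHaar_of_involutive {E : Type*} [NormedAddCommGroup E] [NormedSpace ℝ E]
    [MeasurableSpace E] [BorelSpace E] [FiniteDimensional ℝ E] (μ : Measure E)
    [μ.IsAddHaarMeasure] {f : E →ₗ[ℝ] E} (hf : Function.Involutive f) : μ.map f = μ := by
  have hdet : LinearMap.det f * LinearMap.det f = 1 := by
    rw [← LinearMap.det_comp, show f ∘ₗ f = LinearMap.id from LinearMap.ext hf, LinearMap.det_id]
  rw [Measure.map_linearMap_addHaar_eq_smul_addHaar μ (left_ne_zero_of_mul_eq_one hdet)]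
  rcases mul_self_eq_one_iff.mp hdet with h | h <;> simp [h]

end LinearMap

theorem MeasureTheory.MeasurePreserving.map_withDensity_eq_self {α : Type*} [MeasurableSpace α]
    {μ : Measure α} {e : α → α} (he : MeasurePreserving e μ μ) {f : α → ℝ≥0∞}
    (hf : Measurable f) (hfe : ∀ x, f (e x) = f x) :
    (μ.withDensity f).map e = μ.withDensity f := by
  ext s hs
  rw [Measure.map_apply he.measurable hs, withDensity_apply _ (he.measurable hs),
    withDensity_apply _ hs, ← he.map_eq, setLIntegral_map hs hf he.measurable, he.map_eq]
  simp only [hfe]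

namespace Matrix

variable {n R : Type*} [Fintype n] [CommRing R]

theorem transpose_eq_neg_of_forall_dotProduct_mulVec_self_eq_zero [DecidableEq n]
    {N : Matrix n n R} (h : ∀ x : n → R, x ⬝ᵥ N *ᵥ x = 0) : Nᵀ = -N := by
  ext i j
  have hij := h (Pi.single i 1 + Pi.single j 1)
  have hi := h (Pi.single i 1)
  have hj := h (Pi.single j 1)
  simp only [add_dotProduct, dotProduct_add, mulVec_add, mulVec_single_one,
    single_dotProduct, col_apply, one_mul] at hij hi hj
  simp only [transpose_apply, neg_apply]
  linear_combination hij - hi - hj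

theorem transpose_mul_mul_one_sub_eq_zero [DecidableEq n] {P A : Matrix n n R}
    (hP : IsIdempotentElem P) (h : ∀ x : n → R, x ⬝ᵥ (Pᵀ * A * (1 - P)) *ᵥ x = 0) :
    Pᵀ * A * (1 - P) = 0 := by
  -- `N := Pᵀ A (1 - P)` is skew, `Pᵀ N = N`, and `Pᵀ Nᵀ = ((1 - P) P)ᵀ Aᵀ P = 0`.
  have hskew := transpose_eq_neg_of_forall_dotProduct_mulVec_self_eq_zero h
  have hPP : Pᵀ * Pᵀ = Pᵀ := by rw [← transpose_mul, hP.eq]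
  have hQP : Pᵀ * (1 - P)ᵀ = 0 := by rw [← transpose_mul, hP.one_sub_mul_self, transpose_zero]
  calc Pᵀ * A * (1 - P) = Pᵀ * (Pᵀ * A * (1 - P)) := by simp only [← Matrix.mul_assoc, hPP]
    _ = -(Pᵀ * (Pᵀ * A * (1 - P))ᵀ) := by rw [hskew, Matrix.mul_neg, neg_neg]
    _ = 0 := by simp only [transpose_mul, ← Matrix.mul_assoc, hQP, Matrix.zero_mul, neg_zero]

theorem mulVec_dotProduct_mulVec_mulVec (A B C : Matrix n n R) (u v : n → R) :
    B *ᵥ u ⬝ᵥ A *ᵥ C *ᵥ v = u ⬝ᵥ (Bᵀ * A * C) *ᵥ v := by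
  rw [mulVec_mulVec, dotProduct_mulVec, ← vecMul_transpose, vecMul_vecMul, dotProduct_mulVec,
    Matrix.mul_assoc]

theorem projectorMix_toLin'_apply [DecidableEq n] (P : Matrix n n R) (z : (n → R) × (n → R)) :
    LinearMap.projectorMix (toLin' P) z =
      (P *ᵥ z.1 + (1 - P) *ᵥ z.2, (1 - P) *ᵥ z.1 + P *ᵥ z.2) := by
  simp [sub_mulVec]

theorem dotProduct_mulVec_projectorMix [DecidableEq n] {P A : Matrix n n R} (hA : A.IsSymm)
    (hPA : Pᵀ * A * (1 - P) = 0) (z : (n → R) × (n → R)) :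
    let w := LinearMap.projectorMix (toLin' P) z
    w.1 ⬝ᵥ A *ᵥ w.1 + w.2 ⬝ᵥ A *ᵥ w.2 = z.1 ⬝ᵥ A *ᵥ z.1 + z.2 ⬝ᵥ A *ᵥ z.2 := by
  have hQA : (1 - P)ᵀ * A * P = 0 := by
    simpa only [transpose_mul, transpose_transpose, hA.eq, Matrix.mul_assoc, transpose_zero]
      using congrArg transpose hPA
  have hPQ (x y : n → R) : P *ᵥ x ⬝ᵥ A *ᵥ (1 - P) *ᵥ y = 0 := by
    rw [mulVec_dotProduct_mulVec_mulVec, hPA, zero_mulVec, dotProduct_zero]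
  have hQP (x y : n → R) : (1 - P) *ᵥ x ⬝ᵥ A *ᵥ P *ᵥ y = 0 := by
    rw [mulVec_dotProduct_mulVec_mulVec, hQA, zero_mulVec, dotProduct_zero]
  have hsplit (x : n → R) : x = P *ᵥ x + (1 - P) *ᵥ x := by
    rw [← add_mulVec, add_sub_cancel, one_mulVec]
  obtain ⟨u, v⟩ := z
  dsimp only
  rw [projectorMix_toLin'_apply]
  conv_rhs => rw [hsplit u, hsplit v]
  simp only [mulVec_add, dotProduct_add, add_dotProduct, hPQ, hQP]
  ring

end Matrix

noncomputable def gaussianPDF (d : ℕ) (m : Fin d → ℝ) (S : Matrix (Fin d) (Fin d) ℝ)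
    (x : Fin d → ℝ) : ℝ≥0∞ :=
  ENNReal.ofReal ((Real.sqrt ((2 * Real.pi) ^ d * S.det))⁻¹ *
      Real.exp (-(1 / 2) * ((x - m) ⬝ᵥ S⁻¹.mulVec (x - m))))

section Gaussian

variable {d : ℕ} {m : Fin d → ℝ} {S : Matrix (Fin d) (Fin d) ℝ}

theorem gaussian_eq_withDensity : gaussian d m S = volume.withDensity (gaussianPDF d m S) := rfl

@[fun_prop]
theorem measurable_gaussianPDF : Measurable (gaussianPDF d m S) := by
  unfold gaussianPDF
  fun_prop

theorem gaussianPDF_mul_gaussianPDF (x y : Fin d → ℝ) :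
    gaussianPDF d m S x * gaussianPDF d m S y =
      ENNReal.ofReal ((Real.sqrt ((2 * Real.pi) ^ d * S.det))⁻¹ ^ 2 *
        Real.exp (-(1 / 2) * ((x - m) ⬝ᵥ S⁻¹ *ᵥ (x - m) + (y - m) ⬝ᵥ S⁻¹ *ᵥ (y - m)))) := by
  rw [gaussianPDF, gaussianPDF, ← ENNReal.ofReal_mul (by positivity), mul_add, Real.exp_add]
  ring_nf

theorem gaussianPDF_mul_gaussianPDF_projectorMix {P : Matrix (Fin d) (Fin d) ℝ}
    (hS : S.IsSymm) (hPS : Pᵀ * S⁻¹ * (1 - P) = 0) (z : (Fin d → ℝ) × (Fin d → ℝ)) :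
    let w := LinearMap.projectorMix (toLin' P) z
    gaussianPDF d m S w.1 * gaussianPDF d m S w.2 =
      gaussianPDF d m S z.1 * gaussianPDF d m S z.2 := by
  intro w
  have hw : (w.1 - m, w.2 - m) = LinearMap.projectorMix (toLin' P) (z - (m, m)) := by
    rw [map_sub, LinearMap.projectorMix_diag]; rfl
  have hquad := dotProduct_mulVec_projectorMix hS.inv hPS (z - (m, m))
  rw [← hw] at hquad
  rw [gaussianPDF_mul_gaussianPDF, gaussianPDF_mul_gaussianPDF]
  exact congr(ENNReal.ofReal (_ * Real.exp (_ * $hquad)))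

theorem map_projectorMix_gaussian_prod {P : Matrix (Fin d) (Fin d) ℝ} (hS : S.IsSymm)
    (hP : IsIdempotentElem P) (hPS : Pᵀ * S⁻¹ * (1 - P) = 0) :
    ((gaussian d m S).prod (gaussian d m S)).map (LinearMap.projectorMix (toLin' P)) =
      (gaussian d m S).prod (gaussian d m S) := by
  have := Measure.prod.instIsAddHaarMeasure (volume : Measure (Fin d → ℝ))
    (volume : Measure (Fin d → ℝ))
  have hT : MeasurePreserving (LinearMap.projectorMix (toLin' P))
      ((volume : Measure (Fin d → ℝ)).prod volume) (volume.prod volume) :=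
    ⟨(LinearMap.projectorMix (toLin' P)).continuous_of_finiteDimensional.measurable,
      LinearMap.map_addHaar_of_involutive _
        (LinearMap.projectorMix_involutive (hP.map (toLinAlgEquiv' (R := ℝ))))⟩
  rw [gaussian_eq_withDensity, prod_withDensity measurable_gaussianPDF measurable_gaussianPDF]
  exact hT.map_withDensity_eq_self (by fun_prop)
    (gaussianPDF_mul_gaussianPDF_projectorMix hS hPS)

end Gaussian

/-- If `X, Y ∼ N(m, Σ)` are independent and `P` is a `Σ⁻¹`-orthogonal projector,
then `Z = P X + (I - P) Y` is also distributed according to `N(m, Σ)`. -/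
theorem gaussian_invariant_under_projector_mixing (d : ℕ)
    (m : Fin d → ℝ) (S P : Matrix (Fin d) (Fin d) ℝ)
    (hS : S.PosDef) (hP : P * P = P)
    (horth : ∀ x : Fin d → ℝ, x ⬝ᵥ (Pᵀ * S⁻¹ * (1 - P)).mulVec x = 0)
    {Ω : Type*} [MeasureSpace Ω] [IsProbabilityMeasure (ℙ : Measure Ω)]
    (X Y : Ω → (Fin d → ℝ)) (hX : Measurable X) (hY : Measurable Y)
    (hindep : ProbabilityTheory.IndepFun X Y ℙ)
    (hXlaw : Measure.map X ℙ = gaussian d m S)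
    (hYlaw : Measure.map Y ℙ = gaussian d m S) :
    Measure.map (fun ω => P.mulVec (X ω) + (1 - P).mulVec (Y ω)) ℙ = gaussian d m S := by
  have : IsProbabilityMeasure (gaussian d m S) :=
    hXlaw ▸ Measure.isProbabilityMeasure_map hX.aemeasurable
  set T := LinearMap.projectorMix (toLin' P)
  have hT : Measurable T := T.continuous_of_finiteDimensional.measurable
  have hjoint :
      Measure.map (fun ω => (X ω, Y ω)) ℙ = (gaussian d m S).prod (gaussian d m S) := by
    rw [(ProbabilityTheory.indepFun_iff_map_prod_eq_prod_map_map hX.aemeasurable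
      hY.aemeasurable).mp hindep, hXlaw, hYlaw]
  have hZ : (fun ω => P *ᵥ X ω + (1 - P) *ᵥ Y ω) = Prod.fst ∘ T ∘ fun ω => (X ω, Y ω) := by
    funext ω
    simp only [Function.comp_apply, T, projectorMix_toLin'_apply]
  rw [hZ, ← Measure.map_map measurable_fst (hT.comp (hX.prodMk hY)),
    ← Measure.map_map hT (hX.prodMk hY), hjoint,
    map_projectorMix_gaussian_prod (isHermitian_iff_isSymm.mp hS.isHermitian) hP
      (transpose_mul_mul_one_sub_eq_zero hP horth)]
  exact Measure.fst_prod
end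

section
/- Let Σ ∈ ℝ^{d×d} be symmetric positive definite and H ∈ ℝ^{d×d} symmetric positive semidefinite. Let (λ_i, v_i) for i = 1,…,d be the generalized eigenpairs of the pair (H, Σ^{-1}), i.e., H v_i = λ_i Σ^{-1} v_i with v_iᵀΣ^{-1}v_i = 1 and λ_1 ≥ λ_2 ≥ … ≥ λ_d ≥ 0. Then for any r ≤ d, the minimum of trace( Σ (I − P_rᵀ) H (I − P_r) ) over all rank-r projectors P_r ∈ ℝ^{d×d} equals λ_{r+1} + … + λ_d, and this minimum is attained by the Σ^{-1}-orthogonal projector P_r = (∑_{i=1}^r v_i v_iᵀ) Σ^{-1}. -/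
set_option linter.unusedSectionVars false
set_option linter.unusedVariables false
set_option maxHeartbeats 1000000

open Matrix Finset

open Matrix Finset

section auxmat

variable {n : Type*} [Fintype n] [DecidableEq n]

lemma tr_mul_vmv (A : Matrix n n ℝ) (x y : n → ℝ) :
    (A * vecMulVec x y).trace = y ⬝ᵥ (A *ᵥ x) := by
  simp only [Matrix.trace, Matrix.diag, Matrix.mul_apply, Matrix.vecMulVec_apply,
    dotProduct, Matrix.mulVec, Finset.mul_sum]
  refine Finset.sum_congr rfl fun i _ => Finset.sum_congr rfl fun j _ => by ring

lemma mul_vmv (A : Matrix n n ℝ) (x y : n → ℝ) :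
    A * vecMulVec x y = vecMulVec (A *ᵥ x) y := by
  ext a b
  simp only [Matrix.mul_apply, Matrix.vecMulVec_apply, Matrix.mulVec, dotProduct,
    Finset.sum_mul]
  exact Finset.sum_congr rfl fun j _ => by ring

lemma vmv_mul (A : Matrix n n ℝ) (x y : n → ℝ) :
    vecMulVec x y * A = vecMulVec x (Aᵀ *ᵥ y) := by
  ext a b
  simp only [Matrix.mul_apply, Matrix.vecMulVec_apply, Matrix.mulVec, dotProduct,
    Matrix.transpose_apply, Finset.mul_sum]
  exact Finset.sum_congr rfl fun j _ => by ring

lemma vmv_conj (A : Matrix n n ℝ) (x y : n → ℝ) :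
    A * vecMulVec x y * Aᵀ = vecMulVec (A *ᵥ x) (A *ᵥ y) := by
  rw [mul_vmv, vmv_mul, transpose_transpose]

lemma vmv_mul_vmv (M : Matrix n n ℝ) (x y z w : n → ℝ) :
    vecMulVec x y * M * vecMulVec z w = (y ⬝ᵥ (M *ᵥ z)) • vecMulVec x w := by
  rw [vmv_mul, mul_vmv]
  ext a b
  simp only [Matrix.vecMulVec_apply, Matrix.smul_apply, Matrix.mulVec, dotProduct,
    Matrix.transpose_apply, smul_eq_mul, Finset.sum_mul, Finset.mul_sum]
  rw [Finset.sum_comm]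
  refine Finset.sum_congr rfl fun i _ => Finset.sum_congr rfl fun j _ => by ring

lemma trace_idem_eq_rank {A : Matrix n n ℝ} (h : A * A = A) : A.trace = (A.rank : ℝ) := by
  have hproj : LinearMap.IsProj (LinearMap.range A.mulVecLin) A.mulVecLin := by
    constructor
    · exact fun x => ⟨x, rfl⟩
    · rintro x ⟨y, rfl⟩
      show A *ᵥ (A *ᵥ y) = A *ᵥ y
      rw [Matrix.mulVec_mulVec, h]
  have ht := hproj.trace
  rw [LinearMap.trace_eq_matrix_trace ℝ (Pi.basisFun ℝ n), LinearMap.toMatrix_eq_toMatrix'] at ht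
  have : LinearMap.toMatrix' A.mulVecLin = A := LinearMap.toMatrix'_toLin' A
  rw [this] at ht
  exact ht

end auxmat

section auxmore
variable {n : Type*} [Fintype n] [DecidableEq n]

lemma vmv_mulVec (x y z : n → ℝ) : vecMulVec x y *ᵥ z = (y ⬝ᵥ z) • x := by
  ext a
  simp only [Matrix.mulVec, Matrix.vecMulVec_apply, dotProduct, Pi.smul_apply,
    smul_eq_mul, Finset.sum_mul, Finset.mul_sum]
  exact Finset.sum_congr rfl fun j _ => by ring

lemma dot_aux (A : Matrix n n ℝ) (x y : n → ℝ) : (Aᵀ *ᵥ x) ⬝ᵥ y = x ⬝ᵥ (A *ᵥ y) := by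
  rw [Matrix.mulVec_transpose, dotProduct_mulVec]

lemma herm_t {A : Matrix n n ℝ} (h : A.IsHermitian) : Aᵀ = A := by
  ext i j
  have h2 := congrFun (congrFun h i) j
  simpa [Matrix.conjTranspose_apply, Matrix.transpose_apply] using h2

end auxmore
open Finset

lemma abel_nat (d r : ℕ) (hr : r ≤ d) (L B : ℕ → ℝ)
    (hmono : ∀ m n, m ≤ n → L n ≤ L m)
    (hLd : L d = 0)
    (hB0 : ∀ n, 0 ≤ B n) (hB1 : ∀ n, B n ≤ 1)
    (hsum : ∑ n ∈ Finset.range d, B n = (d : ℝ) - r) :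
    ∑ n ∈ Finset.Ico r d, L n ≤ ∑ n ∈ Finset.range d, L n * B n := by
  set M : ℕ → ℝ := fun n => L n - L (n + 1) with hM
  have hM0 : ∀ n, 0 ≤ M n := fun n => sub_nonneg.2 (hmono n (n + 1) (Nat.le_succ n))
  have htel : ∀ i, i ≤ d → L i = ∑ k ∈ Finset.Ico i d, M k := by
    intro i hi
    rw [Finset.sum_Ico_eq_sum_range]
    have h1 : ∑ j ∈ Finset.range (d - i), ((fun j => L (i + j)) j - (fun j => L (i + j)) (j + 1))
        = (fun j => L (i + j)) 0 - (fun j => L (i + j)) (d - i) :=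
      Finset.sum_range_sub' (fun j => L (i + j)) (d - i)
    simp only [hM] at h1 ⊢
    have h2 : i + (d - i) = d := by omega
    have h3 : ∀ j, i + j + 1 = i + (j + 1) := fun j => by omega
    calc L i = L (i + 0) - L (i + (d - i)) := by rw [h2, hLd, add_zero, sub_zero]
    _ = ∑ j ∈ Finset.range (d - i), (L (i + j) - L (i + j + 1)) := by
        rw [← h1]; exact Finset.sum_congr rfl fun j _ => by rw [h3]
    _ = _ := rfl
  set X : ℕ → ℝ := fun n => B n - (if r ≤ n then 1 else 0) with hX
  have key1 : ∀ k, k < d → 0 ≤ ∑ n ∈ Finset.range (k + 1), X n := by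
    intro k hk
    have hfil : (Finset.range (k + 1)).filter (fun n => r ≤ n) = Finset.Ico r (k + 1) := by
      ext n; simp [Finset.mem_filter, Finset.mem_range, Finset.mem_Ico]; omega
    have hite : ∑ n ∈ Finset.range (k + 1), (if r ≤ n then (1 : ℝ) else 0)
        = ((k + 1 - r : ℕ) : ℝ) := by
      rw [← Finset.sum_filter, hfil]
      simp [Nat.card_Ico]
    have hXsum : ∑ n ∈ Finset.range (k + 1), X n
        = (∑ n ∈ Finset.range (k + 1), B n) - ((k + 1 - r : ℕ) : ℝ) := by
      rw [hX]; rw [Finset.sum_sub_distrib, hite]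
    rw [hXsum, sub_nonneg]
    rcases le_or_gt (k + 1) r with hcase | hcase
    · have : k + 1 - r = 0 := by omega
      rw [this, Nat.cast_zero]
      exact Finset.sum_nonneg fun n _ => hB0 n
    · have hrk : r ≤ k := by omega
      have hsplit : ∑ n ∈ Finset.range (k + 1), B n + ∑ n ∈ Finset.Ico (k + 1) d, B n
          = ∑ n ∈ Finset.range d, B n := by
        rw [Finset.range_eq_Ico, Finset.range_eq_Ico]
        exact Finset.sum_Ico_consecutive B (by omega : 0 ≤ k + 1) (by omega : k + 1 ≤ d)
      have hIco : ∑ n ∈ Finset.Ico (k + 1) d, B n ≤ ((d - (k + 1) : ℕ) : ℝ) := by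
        have := Finset.sum_le_card_nsmul (Finset.Ico (k + 1) d) B 1 (fun n _ => hB1 n)
        rw [Nat.card_Ico] at this
        simpa using this
      have hc1 : ((k + 1 - r : ℕ) : ℝ) = (k : ℝ) + 1 - r := by
        have : (k + 1 - r : ℕ) = k + 1 - r := rfl
        rw [Nat.cast_sub (by omega)]; push_cast; ring
      have hc2 : ((d - (k + 1) : ℕ) : ℝ) = (d : ℝ) - (k + 1) := by
        rw [Nat.cast_sub (by omega)]; push_cast; ring
      rw [hc1]
      have := hsum
      linarith [hsplit, hIco, hc2.symm ▸ hIco]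
  -- main rearrangement
  have hIcoFil : Finset.Ico r d = (Finset.range d).filter (fun n => r ≤ n) := by
    ext n; simp [Finset.mem_filter, Finset.mem_range, Finset.mem_Ico]; omega
  have hstep1 : ∑ n ∈ Finset.range d, L n * B n - ∑ n ∈ Finset.Ico r d, L n
      = ∑ n ∈ Finset.range d, L n * X n := by
    rw [hIcoFil, Finset.sum_filter, ← Finset.sum_sub_distrib]
    refine Finset.sum_congr rfl fun n _ => ?_
    rw [hX]; simp only [mul_sub, mul_ite, mul_one, mul_zero]
  have hstep2 : ∑ n ∈ Finset.range d, L n * X n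
      = ∑ k ∈ Finset.range d, M k * ∑ n ∈ Finset.range (k + 1), X n := by
    have e1 : ∀ n ∈ Finset.range d, L n * X n
        = ∑ k ∈ Finset.range d, (if n ≤ k then M k * X n else 0) := by
      intro n hn
      rw [htel n (le_of_lt (Finset.mem_range.1 hn)), Finset.sum_mul]
      have : Finset.Ico n d = (Finset.range d).filter (fun k => n ≤ k) := by
        ext m; simp [Finset.mem_filter, Finset.mem_range, Finset.mem_Ico]; omega
      rw [this, Finset.sum_filter]
    rw [Finset.sum_congr rfl e1, Finset.sum_comm]
    refine Finset.sum_congr rfl fun k hk => ?_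
    have : Finset.range (k + 1) = (Finset.range d).filter (fun n => n ≤ k) := by
      have hkd := Finset.mem_range.1 hk
      ext m; simp [Finset.mem_filter, Finset.mem_range]; omega
    rw [this, Finset.mul_sum, Finset.sum_filter]
  have hfinal : 0 ≤ ∑ k ∈ Finset.range d, M k * ∑ n ∈ Finset.range (k + 1), X n :=
    Finset.sum_nonneg fun k hk =>
      mul_nonneg (hM0 k) (key1 k (Finset.mem_range.1 hk))
  linarith [hstep1, hstep2, hfinal]
-- skeleton marker

/-- Minimization of `P ↦ trace(Σ (I - Pᵀ) H (I - P))` over rank-`r` projectors: the minimum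
equals the sum of the trailing generalized eigenvalues of the pair `(H, Σ⁻¹)`, and it is
attained by the `Σ⁻¹`-orthogonal projector `P = (∑_{i<r} vᵢ vᵢᵀ) Σ⁻¹`. -/
theorem min_trace_over_rank_r_projectors (d r : ℕ) (hr : r ≤ d)
    (S H : Matrix (Fin d) (Fin d) ℝ) (hS : S.PosDef) (hH : H.PosSemidef)
    (lam : Fin d → ℝ) (v : Fin d → (Fin d → ℝ))
    (heig : ∀ i, H.mulVec (v i) = lam i • S⁻¹.mulVec (v i))
    (horthonorm : ∀ i j, v i ⬝ᵥ S⁻¹.mulVec (v j) = if i = j then 1 else 0)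
    (hdec : Antitone lam) (hnonneg : ∀ i, 0 ≤ lam i) :
    IsLeast {t : ℝ | ∃ P : Matrix (Fin d) (Fin d) ℝ, P * P = P ∧ P.rank = r ∧
        t = (S * (1 - Pᵀ) * H * (1 - P)).trace}
      (∑ i ∈ Finset.univ.filter (fun i : Fin d => r ≤ (i : ℕ)), lam i) ∧
    ((∑ i ∈ Finset.univ.filter (fun i : Fin d => (i : ℕ) < r), vecMulVec (v i) (v i)) * S⁻¹) *
        ((∑ i ∈ Finset.univ.filter (fun i : Fin d => (i : ℕ) < r), vecMulVec (v i) (v i)) * S⁻¹)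
      = (∑ i ∈ Finset.univ.filter (fun i : Fin d => (i : ℕ) < r), vecMulVec (v i) (v i)) * S⁻¹ ∧
    ((∑ i ∈ Finset.univ.filter (fun i : Fin d => (i : ℕ) < r), vecMulVec (v i) (v i)) * S⁻¹).rank
      = r ∧
    (∀ x : Fin d → ℝ,
      x ⬝ᵥ ((((∑ i ∈ Finset.univ.filter (fun i : Fin d => (i : ℕ) < r),
              vecMulVec (v i) (v i)) * S⁻¹)ᵀ * S⁻¹ *
            (1 - (∑ i ∈ Finset.univ.filter (fun i : Fin d => (i : ℕ) < r),
              vecMulVec (v i) (v i)) * S⁻¹)).mulVec x) = 0) ∧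
    (S * (1 - ((∑ i ∈ Finset.univ.filter (fun i : Fin d => (i : ℕ) < r),
          vecMulVec (v i) (v i)) * S⁻¹)ᵀ) * H *
        (1 - (∑ i ∈ Finset.univ.filter (fun i : Fin d => (i : ℕ) < r),
          vecMulVec (v i) (v i)) * S⁻¹)).trace
      = ∑ i ∈ Finset.univ.filter (fun i : Fin d => r ≤ (i : ℕ)), lam i := by
  classical
  -- basic facts about S
  have hSdetu : IsUnit S.det := isUnit_iff_ne_zero.2 (ne_of_gt hS.det_pos)
  have hSS : S * S⁻¹ = 1 := Matrix.mul_nonsing_inv S hSdetu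
  have hSS' : S⁻¹ * S = 1 := Matrix.nonsing_inv_mul S hSdetu
  have hST : Sᵀ = S := herm_t hS.1
  have hSiT : S⁻¹ᵀ = S⁻¹ := by rw [Matrix.transpose_nonsing_inv, hST]
  -- completeness : ∑ i, v i (v i)ᵀ = S
  set V : Matrix (Fin d) (Fin d) ℝ := Matrix.of (fun a b => v b a) with hV
  have h1 : (Vᵀ * S⁻¹) * V = 1 := by
    ext i j
    have hcalc : ((Vᵀ * S⁻¹) * V) i j = v i ⬝ᵥ S⁻¹ *ᵥ v j := by
      simp only [Matrix.mul_apply, Matrix.transpose_apply, hV, Matrix.of_apply,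
        dotProduct, Matrix.mulVec, Finset.sum_mul, Finset.mul_sum]
      rw [Finset.sum_comm]
      exact Finset.sum_congr rfl fun l _ => Finset.sum_congr rfl fun k _ => by ring
    rw [hcalc, horthonorm i j, Matrix.one_apply]
  have h2 : V * (Vᵀ * S⁻¹) = 1 := mul_eq_one_comm.mp h1
  have h3 : V * Vᵀ = S := by
    calc V * Vᵀ = V * Vᵀ * (S⁻¹ * S) := by rw [hSS', Matrix.mul_one]
    _ = V * (Vᵀ * S⁻¹) * S := by simp only [Matrix.mul_assoc]
    _ = S := by rw [h2, Matrix.one_mul]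
  have hcomp : ∑ i, vecMulVec (v i) (v i) = S := by
    rw [← h3]
    ext a b
    simp only [Matrix.sum_apply, Matrix.vecMulVec_apply, Matrix.mul_apply, hV,
      Matrix.transpose_apply, Matrix.of_apply]
  -- H decomposition
  set w : Fin d → (Fin d → ℝ) := fun i => S⁻¹ *ᵥ v i with hw
  have hHdec : H = ∑ i, lam i • vecMulVec (w i) (w i) := by
    have hH1 : H * S = ∑ i, lam i • vecMulVec (w i) (v i) := by
      rw [← hcomp, Finset.mul_sum]
      refine Finset.sum_congr rfl fun i _ => ?_
      rw [mul_vmv, heig i]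
      ext a b
      simp only [Matrix.vecMulVec_apply, Matrix.smul_apply, Pi.smul_apply, smul_eq_mul, hw]
      ring
    have hHS : H = (H * S) * S⁻¹ := by rw [Matrix.mul_assoc, hSS, Matrix.mul_one]
    rw [hHS, hH1, Finset.sum_mul]
    refine Finset.sum_congr rfl fun i _ => ?_
    rw [Matrix.smul_mul, vmv_mul, hSiT]
  -- generic trace formula
  have hperm : ∀ P : Matrix (Fin d) (Fin d) ℝ,
      (S * (1 - Pᵀ) * H * (1 - P)).trace = (((1 - P) * S * (1 - Pᵀ)) * H).trace := by
    intro P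
    rw [Matrix.trace_mul_comm]
    simp only [Matrix.mul_assoc]
  have htr : ∀ P : Matrix (Fin d) (Fin d) ℝ,
      (S * (1 - Pᵀ) * H * (1 - P)).trace
      = ∑ i, lam i * (w i ⬝ᵥ (((1 - P) * S * (1 - Pᵀ)) *ᵥ w i)) := by
    intro P
    rw [hperm P, hHdec, Finset.mul_sum, Matrix.trace_sum]
    refine Finset.sum_congr rfl fun i _ => ?_
    rw [Matrix.mul_smul, Matrix.trace_smul, tr_mul_vmv]
    rfl
  -- cardinality of the filters
  have hfil_lt : ((Finset.range d).filter (fun m => m < r)) = Finset.range r := by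
    ext m
    simp only [Finset.mem_filter, Finset.mem_range]
    omega
  have hcard_lt : (Finset.univ.filter (fun i : Fin d => (i : ℕ) < r)).card = r := by
    rw [Finset.card_filter]
    calc ∑ i : Fin d, (if (i : ℕ) < r then 1 else 0)
        = ∑ m ∈ Finset.range d, (if m < r then 1 else 0) :=
          Fin.sum_univ_eq_sum_range (fun m => if m < r then 1 else 0) d
      _ = ((Finset.range d).filter (fun m => m < r)).card := (Finset.card_filter _ _).symm
      _ = r := by rw [hfil_lt, Finset.card_range]
  -- the explicit projector
  set K : Matrix (Fin d) (Fin d) ℝ :=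
    ∑ i ∈ Finset.univ.filter (fun i : Fin d => (i : ℕ) < r), vecMulVec (v i) (v i) with hK
  set P₀ : Matrix (Fin d) (Fin d) ℝ := K * S⁻¹ with hP₀
  have hKT : Kᵀ = K := by
    rw [hK, Matrix.transpose_sum]
    refine Finset.sum_congr rfl fun i _ => ?_
    ext a b
    simp only [Matrix.transpose_apply, Matrix.vecMulVec_apply]
    ring
  have hKSK : K * S⁻¹ * K = K := by
    rw [hK, Finset.sum_mul, Finset.sum_mul]
    refine Finset.sum_congr rfl fun i hi => ?_
    rw [Finset.mul_sum]
    have hterm : ∀ j, vecMulVec (v i) (v i) * S⁻¹ * vecMulVec (v j) (v j)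
        = (if i = j then (1:ℝ) else 0) • vecMulVec (v i) (v j) := by
      intro j
      rw [vmv_mul_vmv, horthonorm i j]
    simp only [hterm, ite_smul, one_smul, zero_smul]
    rw [Finset.sum_ite_eq (Finset.univ.filter (fun i : Fin d => (i : ℕ) < r)) i
      (fun j => vecMulVec (v i) (v j))]
    simp [hi]
  have hPP : P₀ * P₀ = P₀ := by
    rw [hP₀]
    calc K * S⁻¹ * (K * S⁻¹) = (K * S⁻¹ * K) * S⁻¹ := by simp only [Matrix.mul_assoc]
    _ = K * S⁻¹ := by rw [hKSK]
  have htrP : P₀.trace = (r : ℝ) := by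
    rw [hP₀, hK, Finset.sum_mul, Matrix.trace_sum]
    have : ∀ i, (vecMulVec (v i) (v i) * S⁻¹).trace = (1 : ℝ) := by
      intro i
      rw [Matrix.trace_mul_comm, tr_mul_vmv, horthonorm i i, if_pos rfl]
    rw [Finset.sum_congr rfl fun i _ => this i, Finset.sum_const, hcard_lt]
    simp
  have hrank : P₀.rank = r := by
    have h := trace_idem_eq_rank hPP
    rw [htrP] at h
    exact_mod_cast h.symm
  have hPT : P₀ᵀ = S⁻¹ * K := by rw [hP₀, Matrix.transpose_mul, hKT, hSiT]
  have horthP : P₀ᵀ * S⁻¹ * (1 - P₀) = 0 := by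
    rw [hPT, Matrix.mul_sub, Matrix.mul_one, hP₀]
    have e1 : S⁻¹ * K * S⁻¹ * (K * S⁻¹) = S⁻¹ * (K * S⁻¹ * K) * S⁻¹ := by
      simp only [Matrix.mul_assoc]
    rw [e1, hKSK, sub_self]
  have hPS : P₀ * S = K := by rw [hP₀, Matrix.mul_assoc, hSS', Matrix.mul_one]
  have hSPT : S * P₀ᵀ = K := by rw [hPT, ← Matrix.mul_assoc, hSS, Matrix.one_mul]
  have hPSPT : P₀ * S * P₀ᵀ = K := by rw [hPS, hPT, ← Matrix.mul_assoc, hKSK]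
  have hfact : (1 - P₀) * S * (1 - P₀ᵀ) = S - K := by
    rw [Matrix.sub_mul, Matrix.one_mul, Matrix.mul_sub, Matrix.mul_one, Matrix.sub_mul,
      hSPT, hPSPT, hPS, sub_self, sub_zero]
  have htrSH : (S * H).trace = ∑ i, lam i := by
    rw [← hcomp, Finset.sum_mul, Matrix.trace_sum]
    refine Finset.sum_congr rfl fun i _ => ?_
    rw [Matrix.trace_mul_comm, tr_mul_vmv, heig i]
    have : v i ⬝ᵥ (lam i • (S⁻¹ *ᵥ v i)) = lam i * (v i ⬝ᵥ (S⁻¹ *ᵥ v i)) := by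
      simp only [dotProduct, Pi.smul_apply, smul_eq_mul, Finset.mul_sum]
      exact Finset.sum_congr rfl fun j _ => by ring
    rw [this, horthonorm i i, if_pos rfl, mul_one]
  have htrKH : (K * H).trace = ∑ i ∈ Finset.univ.filter (fun i : Fin d => (i : ℕ) < r), lam i := by
    rw [hK, Finset.sum_mul, Matrix.trace_sum]
    refine Finset.sum_congr rfl fun i _ => ?_
    rw [Matrix.trace_mul_comm, tr_mul_vmv, heig i]
    have : v i ⬝ᵥ (lam i • (S⁻¹ *ᵥ v i)) = lam i * (v i ⬝ᵥ (S⁻¹ *ᵥ v i)) := by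
      simp only [dotProduct, Pi.smul_apply, smul_eq_mul, Finset.mul_sum]
      exact Finset.sum_congr rfl fun j _ => by ring
    rw [this, horthonorm i i, if_pos rfl, mul_one]
  have hval : (S * (1 - P₀ᵀ) * H * (1 - P₀)).trace
      = ∑ i ∈ Finset.univ.filter (fun i : Fin d => r ≤ (i : ℕ)), lam i := by
    rw [hperm P₀, hfact, Matrix.sub_mul, Matrix.trace_sub, htrSH, htrKH]
    have hsplit := Finset.sum_filter_add_sum_filter_not Finset.univ
      (fun i : Fin d => (i : ℕ) < r) lam
    have hnotlt : Finset.univ.filter (fun i : Fin d => ¬ (i : ℕ) < r)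
        = Finset.univ.filter (fun i : Fin d => r ≤ (i : ℕ)) := by
      refine Finset.filter_congr fun i _ => ?_
      simp [not_lt]
    rw [hnotlt] at hsplit
    linarith
  -- ===== Part B : lower bound over all rank-r projectors =====
  have hlb : ∀ P : Matrix (Fin d) (Fin d) ℝ, P * P = P → P.rank = r →
      (∑ i ∈ Finset.univ.filter (fun i : Fin d => r ≤ (i : ℕ)), lam i)
      ≤ (S * (1 - Pᵀ) * H * (1 - P)).trace := by
    intro P hPP' hPrank'
    -- square root of S
    have hSpsd : S.PosSemidef := hS.posSemidef
    open scoped MatrixOrder in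
    have hex : ∃ T : Matrix (Fin d) (Fin d) ℝ, T * T = S ∧ T.PosSemidef :=
      ⟨CFC.sqrt S, CFC.sqrt_mul_sqrt_self S hSpsd.nonneg, (CFC.sqrt_nonneg S).posSemidef⟩
    obtain ⟨T, hT2, hTpsd⟩ := hex
    have hTT : Tᵀ = T := herm_t hTpsd.1
    have hTdetu : IsUnit T.det := by
      refine isUnit_iff_ne_zero.2 fun h0 => ?_
      have hS0 : S.det = 0 := by rw [← hT2, Matrix.det_mul, h0, mul_zero]
      exact (ne_of_gt hS.det_pos) hS0
    have hTT1 : T * T⁻¹ = 1 := Matrix.mul_nonsing_inv T hTdetu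
    have hT1T : T⁻¹ * T = 1 := Matrix.nonsing_inv_mul T hTdetu
    have hTiT : T⁻¹ᵀ = T⁻¹ := by rw [Matrix.transpose_nonsing_inv, hTT]
    have hSiTT : S⁻¹ = T⁻¹ * T⁻¹ := by rw [← hT2, Matrix.mul_inv_rev]
    set u : Fin d → (Fin d → ℝ) := fun i => T⁻¹ *ᵥ v i with hu
    have hwu : ∀ i, w i = T⁻¹ *ᵥ u i := by
      intro i
      simp only [hw, hu, Matrix.mulVec_mulVec, hSiTT]
    set C : Matrix (Fin d) (Fin d) ℝ := T⁻¹ * (1 - P) * T with hC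
    have hQQ : (1 - P) * (1 - P) = 1 - P := by
      rw [Matrix.sub_mul, Matrix.one_mul, Matrix.mul_sub, Matrix.mul_one, hPP', sub_self,
        sub_zero]
    have ecol : ∀ X : Matrix (Fin d) (Fin d) ℝ, T * (T⁻¹ * X) = X := fun X => by
      rw [← Matrix.mul_assoc, hTT1, Matrix.one_mul]
    have ecol2 : ∀ X : Matrix (Fin d) (Fin d) ℝ, T * (T * X) = S * X := fun X => by
      rw [← Matrix.mul_assoc, hT2]
    have hCC : C * C = C := by
      rw [hC]
      calc T⁻¹ * (1 - P) * T * (T⁻¹ * (1 - P) * T)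
          = T⁻¹ * ((1 - P) * (T * (T⁻¹ * ((1 - P) * T)))) := by simp only [Matrix.mul_assoc]
      _ = T⁻¹ * ((1 - P) * ((1 - P) * T)) := by rw [ecol]
      _ = T⁻¹ * ((1 - P) * (1 - P)) * T := by simp only [Matrix.mul_assoc]
      _ = T⁻¹ * (1 - P) * T := by rw [hQQ]
    have htrC : C.trace = (d : ℝ) - r := by
      have e1 : C.trace = (1 - P).trace := by
        rw [hC, Matrix.trace_mul_comm, ← Matrix.mul_assoc, hTT1, Matrix.one_mul]
      rw [e1, Matrix.trace_sub, Matrix.trace_one, trace_idem_eq_rank hPP', hPrank']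
      simp
    have hrankC : C.rank = d - r := by
      have h := trace_idem_eq_rank hCC
      rw [htrC, ← Nat.cast_sub hr] at h
      exact_mod_cast h.symm
    have huu : ∀ i j, u i ⬝ᵥ u j = if i = j then 1 else 0 := by
      intro i j
      have e1 : u i ⬝ᵥ u j = v i ⬝ᵥ (S⁻¹ *ᵥ v j) := by
        show (T⁻¹ *ᵥ v i) ⬝ᵥ (T⁻¹ *ᵥ v j) = _
        conv_lhs => rw [← hTiT]
        rw [dot_aux, Matrix.mulVec_mulVec, hTiT, ← hSiTT]
      rw [e1, horthonorm i j]
    have hucomp : ∑ i, vecMulVec (u i) (u i) = 1 := by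
      have e1 : ∀ i : Fin d, vecMulVec (u i) (u i) = T⁻¹ * vecMulVec (v i) (v i) * T⁻¹ᵀ :=
        fun i => (vmv_conj T⁻¹ (v i) (v i)).symm
      rw [Finset.sum_congr rfl fun i _ => e1 i, ← Finset.sum_mul, ← Finset.mul_sum, hcomp,
        hTiT, ← hT2]
      rw [← Matrix.mul_assoc, hT1T, Matrix.one_mul, hTT1]
    -- the subspace fixed by C
    set U : Submodule ℝ (EuclideanSpace ℝ (Fin d)) :=
      Submodule.comap (WithLp.linearEquiv 2 ℝ (Fin d → ℝ)).toLinearMap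
        (LinearMap.range C.mulVecLin) with hU
    have hUrank : Module.finrank ℝ U = d - r := by
      rw [hU, Submodule.comap_equiv_eq_map_symm, LinearEquiv.finrank_map_eq]
      exact hrankC
    set onb := stdOrthonormalBasis ℝ U with honb
    set f : Fin (Module.finrank ℝ U) → EuclideanSpace ℝ (Fin d) :=
      fun k => ((onb k : U) : EuclideanSpace ℝ (Fin d)) with hf
    have hforto : Orthonormal ℝ f := by
      rw [orthonormal_iff_ite]
      intro k l
      rw [hf]
      rw [← Submodule.coe_inner]
      exact (orthonormal_iff_ite.mp onb.orthonormal) k l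
    have hinner : ∀ x y : EuclideanSpace ℝ (Fin d),
        (inner ℝ x y : ℝ) = (x : Fin d → ℝ) ⬝ᵥ (y : Fin d → ℝ) := by
      intro x y
      simp [PiLp.inner_apply, RCLike.inner_apply, dotProduct, mul_comm]
    have hfix : ∀ k, C *ᵥ (f k : Fin d → ℝ) = (f k : Fin d → ℝ) := by
      intro k
      have hmem : (f k : Fin d → ℝ) ∈ LinearMap.range C.mulVecLin := (onb k).2
      obtain ⟨y, hy⟩ := hmem
      rw [Matrix.mulVecLin_apply] at hy
      rw [← hy, Matrix.mulVec_mulVec, hCC]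
    have hbessel : ∀ x : EuclideanSpace ℝ (Fin d),
        ∑ k, ((f k : Fin d → ℝ) ⬝ᵥ (x : Fin d → ℝ))^2 ≤ (x : Fin d → ℝ) ⬝ᵥ x := by
      intro x
      calc ∑ k, ((f k : Fin d → ℝ) ⬝ᵥ (x : Fin d → ℝ))^2
          = ∑ k, ‖(inner ℝ (f k) x : ℝ)‖^2 := by
            refine Finset.sum_congr rfl fun k _ => ?_
            rw [hinner, Real.norm_eq_abs, sq_abs]
      _ ≤ ‖x‖^2 := hforto.sum_inner_products_le x
      _ = (x : Fin d → ℝ) ⬝ᵥ x := by rw [← real_inner_self_eq_norm_sq, hinner]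
    set b : Fin d → ℝ := fun i => ∑ k, ((u i) ⬝ᵥ (f k : Fin d → ℝ))^2 with hb
    have hb0 : ∀ i, 0 ≤ b i := fun i => Finset.sum_nonneg fun k _ => sq_nonneg _
    have hb1 : ∀ i, b i ≤ 1 := by
      intro i
      calc b i = ∑ k, ((f k : Fin d → ℝ) ⬝ᵥ u i)^2 := by
            simp only [hb]
            exact Finset.sum_congr rfl fun k _ => by rw [dotProduct_comm]
      _ ≤ u i ⬝ᵥ u i := hbessel (WithLp.toLp 2 (u i))
      _ = 1 := by rw [huu i i, if_pos rfl]
    have hcform : ∀ i, w i ⬝ᵥ (((1 - P) * S * (1 - Pᵀ)) *ᵥ w i)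
        = (Cᵀ *ᵥ u i) ⬝ᵥ (Cᵀ *ᵥ u i) := by
      intro i
      have hCt : Cᵀ = T * (1 - Pᵀ) * T⁻¹ := by
        rw [hC, Matrix.transpose_mul, Matrix.transpose_mul, hTT, hTiT, Matrix.transpose_sub,
          Matrix.transpose_one]
        simp only [Matrix.mul_assoc]
      have e1 : (Cᵀ *ᵥ u i) ⬝ᵥ (Cᵀ *ᵥ u i) = u i ⬝ᵥ ((C * Cᵀ) *ᵥ u i) := by
        rw [dot_aux, Matrix.mulVec_mulVec]
      have e2 : C * Cᵀ = T⁻¹ * ((1 - P) * S * (1 - Pᵀ)) * T⁻¹ := by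
        rw [hC, hCt]
        calc T⁻¹ * (1 - P) * T * (T * (1 - Pᵀ) * T⁻¹)
            = T⁻¹ * ((1 - P) * (T * (T * ((1 - Pᵀ) * T⁻¹)))) := by simp only [Matrix.mul_assoc]
        _ = T⁻¹ * ((1 - P) * (S * ((1 - Pᵀ) * T⁻¹))) := by rw [ecol2]
        _ = T⁻¹ * ((1 - P) * S * (1 - Pᵀ)) * T⁻¹ := by simp only [Matrix.mul_assoc]
      rw [e1, e2, hwu i]
      conv_lhs => rw [← hTiT]
      rw [dot_aux, Matrix.mulVec_mulVec, Matrix.mulVec_mulVec, ← Matrix.mul_assoc, hTiT]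
    have hcb : ∀ i, b i ≤ (Cᵀ *ᵥ u i) ⬝ᵥ (Cᵀ *ᵥ u i) := by
      intro i
      have e1 : ∀ k, (u i) ⬝ᵥ (f k : Fin d → ℝ) = (f k : Fin d → ℝ) ⬝ᵥ (Cᵀ *ᵥ u i) := by
        intro k
        have e2 : (Cᵀ *ᵥ u i) ⬝ᵥ (f k : Fin d → ℝ) = u i ⬝ᵥ (f k : Fin d → ℝ) := by
          rw [dot_aux, hfix k]
        rw [← e2, dotProduct_comm]
      calc b i = ∑ k, ((f k : Fin d → ℝ) ⬝ᵥ (Cᵀ *ᵥ u i))^2 := by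
            simp only [hb]
            exact Finset.sum_congr rfl fun k _ => by rw [e1 k]
      _ ≤ (Cᵀ *ᵥ u i) ⬝ᵥ (Cᵀ *ᵥ u i) := hbessel (WithLp.toLp 2 (Cᵀ *ᵥ u i))
    have hinner1 : ∀ (x : Fin d → ℝ), ∑ i, (u i ⬝ᵥ x)^2 = x ⬝ᵥ x := by
      intro x
      have e1 : ∀ i : Fin d, (u i ⬝ᵥ x)^2 = x ⬝ᵥ (vecMulVec (u i) (u i) *ᵥ x) := by
        intro i
        rw [vmv_mulVec, dotProduct_smul, smul_eq_mul, dotProduct_comm x (u i), sq]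
      calc ∑ i, (u i ⬝ᵥ x)^2 = ∑ i, x ⬝ᵥ (vecMulVec (u i) (u i) *ᵥ x) :=
            Finset.sum_congr rfl fun i _ => e1 i
      _ = x ⬝ᵥ ((∑ i, vecMulVec (u i) (u i)) *ᵥ x) := by
          have hmv : (∑ i, vecMulVec (u i) (u i)) *ᵥ x
              = ∑ i, (vecMulVec (u i) (u i) *ᵥ x) := by
            ext a
            simp only [Matrix.mulVec, dotProduct, Matrix.sum_apply, Finset.sum_apply,
              Finset.sum_mul]
            exact Finset.sum_comm
          rw [hmv]
          simp only [dotProduct, Finset.sum_apply, Finset.mul_sum]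
          exact Finset.sum_comm
      _ = x ⬝ᵥ x := by rw [hucomp, Matrix.one_mulVec]
    have hbsum : ∑ i, b i = (d : ℝ) - r := by
      have hswap : ∑ i, b i = ∑ k, ∑ i, ((u i) ⬝ᵥ (f k : Fin d → ℝ))^2 := by
        simp only [hb]
        exact Finset.sum_comm
      have hone : ∀ k, (f k : Fin d → ℝ) ⬝ᵥ (f k : Fin d → ℝ) = 1 := by
        intro k
        have := (orthonormal_iff_ite.mp hforto) k k
        rw [hinner] at this
        simpa using this
      rw [hswap]
      rw [Finset.sum_congr rfl fun k _ => hinner1 ((f k : Fin d → ℝ))]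
      rw [Finset.sum_congr rfl fun k _ => hone k]
      rw [Finset.sum_const, Finset.card_univ, Fintype.card_fin, hUrank, nsmul_eq_mul, mul_one,
        Nat.cast_sub hr]
    -- apply the Abel bound
    set L : ℕ → ℝ := fun m => if h : m < d then lam ⟨m, h⟩ else 0 with hL
    set B : ℕ → ℝ := fun m => if h : m < d then b ⟨m, h⟩ else 0 with hB
    have hmono : ∀ m1 m2 : ℕ, m1 ≤ m2 → L m2 ≤ L m1 := by
      intro m1 m2 h12
      by_cases h2 : m2 < d
      · have h1 : m1 < d := lt_of_le_of_lt h12 h2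
        simp only [hL, dif_pos h1, dif_pos h2]
        exact hdec (show (⟨m1, h1⟩ : Fin d) ≤ ⟨m2, h2⟩ from h12)
      · by_cases h1 : m1 < d
        · simp only [hL, dif_pos h1, dif_neg h2]
          exact hnonneg _
        · simp only [hL, dif_neg h1, dif_neg h2]
          exact le_rfl
    have hLd : L d = 0 := by simp [hL]
    have hB0' : ∀ m, 0 ≤ B m := by
      intro m
      by_cases h : m < d
      · simp only [hB, dif_pos h]; exact hb0 _
      · simp only [hB, dif_neg h]
        exact le_rfl
    have hB1' : ∀ m, B m ≤ 1 := by
      intro m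
      by_cases h : m < d
      · simp only [hB, dif_pos h]; exact hb1 _
      · simp only [hB, dif_neg h]; norm_num
    have hsum' : ∑ m ∈ Finset.range d, B m = (d : ℝ) - r := by
      rw [← Fin.sum_univ_eq_sum_range (fun m => B m) d, ← hbsum]
      refine Finset.sum_congr rfl fun i _ => ?_
      simp only [hB, dif_pos i.isLt, Fin.eta]
    have hmain := abel_nat d r hr L B hmono hLd hB0' hB1' hsum'
    have hLHS : ∑ m ∈ Finset.Ico r d, L m
        = ∑ i ∈ Finset.univ.filter (fun i : Fin d => r ≤ (i : ℕ)), lam i := by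
      have h1 : Finset.Ico r d = (Finset.range d).filter (fun m => r ≤ m) := by
        ext m
        simp only [Finset.mem_Ico, Finset.mem_filter, Finset.mem_range]
        omega
      rw [h1, Finset.sum_filter, ← Fin.sum_univ_eq_sum_range (fun m => if r ≤ m then L m else 0) d,
        Finset.sum_filter]
      refine Finset.sum_congr rfl fun i _ => ?_
      by_cases hri : r ≤ (i : ℕ) <;> simp only [hri, if_pos, if_neg, hL, dif_pos i.isLt, Fin.eta,
        if_true, if_false]
    have hRHS : ∑ m ∈ Finset.range d, L m * B m = ∑ i, lam i * b i := by
      rw [← Fin.sum_univ_eq_sum_range (fun m => L m * B m) d]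
      refine Finset.sum_congr rfl fun i _ => ?_
      simp only [hL, hB, dif_pos i.isLt, Fin.eta]
    have hfin1 : ∑ i, lam i * b i ≤ ∑ i, lam i * ((Cᵀ *ᵥ u i) ⬝ᵥ (Cᵀ *ᵥ u i)) :=
      Finset.sum_le_sum fun i _ => mul_le_mul_of_nonneg_left (hcb i) (hnonneg i)
    rw [htr P]
    calc ∑ i ∈ Finset.univ.filter (fun i : Fin d => r ≤ (i : ℕ)), lam i
        = ∑ m ∈ Finset.Ico r d, L m := hLHS.symm
    _ ≤ ∑ m ∈ Finset.range d, L m * B m := hmain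
    _ = ∑ i, lam i * b i := hRHS
    _ ≤ ∑ i, lam i * ((Cᵀ *ᵥ u i) ⬝ᵥ (Cᵀ *ᵥ u i)) := hfin1
    _ = ∑ i, lam i * (w i ⬝ᵥ (((1 - P) * S * (1 - Pᵀ)) *ᵥ w i)) :=
        Finset.sum_congr rfl fun i _ => by rw [hcform i]
  -- ===== assemble the final statement =====
  refine ⟨⟨⟨P₀, hPP, hrank, hval.symm⟩, ?_⟩, hPP, hrank, ?_, hval⟩
  · rintro t ⟨P, hp1, hp2, rfl⟩
    exact hlb P hp1 hp2
  · intro x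
    rw [horthP]
    simp [Matrix.zero_mulVec]
end

section
/- For the generalized eigenvalues λ_1 ≥ … ≥ λ_d of the pair (H, Σ^{-1}) and the eigenvalues σ_1² ≥ … ≥ σ_d² of Σ, with H = ∫ (∇f)ᵀR_V(∇f) dμ for a continuously differentiable L-Lipschitz function f (with respect to ‖·‖_V on the codomain and ‖·‖_2 on the domain), it holds that ∑_{i=r+1}^d λ_i ≤ L² ∑_{i=r+1}^d σ_i² for every r ≤ d. -/
open MeasureTheory Matrix

/-- The `n × d` Jacobian matrix of `f : ℝ^d → ℝ^n` at `x`. -/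
noncomputable def jacobian (d n : ℕ) (f : (Fin d → ℝ) → (Fin n → ℝ)) (x : Fin d → ℝ) :
    Matrix (Fin n) (Fin d) ℝ :=
  Matrix.of fun i j => fderiv ℝ (fun y => f y i) x (Pi.single j 1)

/-- The matrix `H = ∫ (∇f)ᵀ R_V (∇f) dμ`, defined entrywise. -/
noncomputable def Hmat (d n : ℕ) (f : (Fin d → ℝ) → (Fin n → ℝ))
    (R : Matrix (Fin n) (Fin n) ℝ) (μ : Measure (Fin d → ℝ)) :
    Matrix (Fin d) (Fin d) ℝ :=
  Matrix.of fun i j => ∫ x, ((jacobian d n f x)ᵀ * R * jacobian d n f x) i j ∂μ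


noncomputable def pairL {d : ℕ} (M : Matrix (Fin d) (Fin d) ℝ) (x : Fin d → ℝ) :
    (Fin d → ℝ) →ₗ[ℝ] ℝ where
  toFun z := x ⬝ᵥ M.mulVec z
  map_add' a b := by simp [Matrix.mulVec_add, dotProduct_add]
  map_smul' c a := by simp [Matrix.mulVec_smul, dotProduct_smul]

lemma pair_sum {d k : ℕ} (M : Matrix (Fin d) (Fin d) ℝ) (x : Fin d → ℝ)
    (c : Fin k → ℝ) (y : Fin k → Fin d → ℝ) :
    x ⬝ᵥ M.mulVec (∑ j, c j • y j) = ∑ j, c j * (x ⬝ᵥ M.mulVec (y j)) :=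
  calc x ⬝ᵥ M.mulVec (∑ j, c j • y j) = pairL M x (∑ j, c j • y j) := rfl
    _ = ∑ j, pairL M x (c j • y j) := map_sum _ _ _
    _ = ∑ j, c j * (x ⬝ᵥ M.mulVec (y j)) := by
        refine Finset.sum_congr rfl fun j _ => ?_
        simp [pairL, Matrix.mulVec_smul]

lemma li_of_gram {d k : ℕ} (M : Matrix (Fin d) (Fin d) ℝ) (w : Fin k → Fin d → ℝ)
    (h : ∀ i j, w i ⬝ᵥ M.mulVec (w j) = if i = j then 1 else 0) :
    LinearIndependent ℝ w := by
  rw [Fintype.linearIndependent_iff]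
  intro g hg i
  have h1 : w i ⬝ᵥ M.mulVec (∑ j, g j • w j) = g i := by
    rw [pair_sum]; simp [h]
  rw [hg] at h1
  simpa using h1.symm

lemma exists_common {d : ℕ} (k : Fin d) (vv : Fin (k+1) → Fin d → ℝ) (uu : Fin (d-k) → Fin d → ℝ)
    (hv : LinearIndependent ℝ vv) (hu : LinearIndependent ℝ uu) :
    ∃ x : Fin d → ℝ, x ≠ 0 ∧ x ∈ Submodule.span ℝ (Set.range vv) ∧
      x ∈ Submodule.span ℝ (Set.range uu) := by
  set V := Submodule.span ℝ (Set.range vv)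
  set U := Submodule.span ℝ (Set.range uu)
  have hVd : Module.finrank ℝ V = k + 1 := by
    rw [finrank_span_eq_card hv]; simp
  have hUd : Module.finrank ℝ U = d - k := by
    rw [finrank_span_eq_card hu]; simp
  have hsum : Module.finrank ℝ ↥(V ⊔ U) + Module.finrank ℝ ↥(V ⊓ U)
      = Module.finrank ℝ V + Module.finrank ℝ U :=
    Submodule.finrank_sup_add_finrank_inf_eq V U
  have htop : Module.finrank ℝ ↥(V ⊔ U) ≤ d := by
    have := Submodule.finrank_le (V ⊔ U)
    simpa [Module.finrank_fintype_fun_eq_card] using this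
  have hpos : 0 < Module.finrank ℝ ↥(V ⊓ U) := by
    have hk := k.isLt
    omega
  obtain ⟨⟨x, hx⟩, hx0⟩ := Module.finrank_pos_iff_exists_ne_zero.mp hpos
  exact ⟨x, by simpa [Submodule.mk_eq_zero] using hx0, hx.1, hx.2⟩

lemma dot_sum {d k : ℕ} (x : Fin d → ℝ) (c : Fin k → ℝ) (y : Fin k → Fin d → ℝ) :
    x ⬝ᵥ (∑ j, c j • y j) = ∑ j, c j * (x ⬝ᵥ y j) := by
  simpa [Matrix.one_mulVec] using pair_sum 1 x c y

lemma sum_dot {d k : ℕ} (c : Fin k → ℝ) (y : Fin k → Fin d → ℝ) (q : Fin d → ℝ) :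
    (∑ j, c j • y j) ⬝ᵥ q = ∑ j, c j * (y j ⬝ᵥ q) := by
  rw [dotProduct_comm, dot_sum]
  exact Finset.sum_congr rfl fun j _ => by rw [dotProduct_comm]

lemma quad_lower {d m : ℕ} (H N : Matrix (Fin d) (Fin d) ℝ) (lam : Fin d → ℝ)
    (v : Fin d → Fin d → ℝ)
    (heig : ∀ i, H.mulVec (v i) = lam i • N.mulVec (v i))
    (horth : ∀ i j, v i ⬝ᵥ N.mulVec (v j) = if i = j then 1 else 0)
    (lo : ℝ) (e : Fin m → Fin d) (he : Function.Injective e) (hlo : ∀ j, lo ≤ lam (e j))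
    (x : Fin d → ℝ) (hx : x ∈ Submodule.span ℝ (Set.range (fun j => v (e j)))) :
    lo * (x ⬝ᵥ N.mulVec x) ≤ x ⬝ᵥ H.mulVec x := by
  obtain ⟨c, hc⟩ := (Submodule.mem_span_range_iff_exists_fun ℝ).mp hx
  have hxN : ∀ j, x ⬝ᵥ N.mulVec (v (e j)) = c j := by
    intro j
    rw [← hc, sum_dot]
    simp only [horth]
    simp [he.eq_iff]
  have hH : x ⬝ᵥ H.mulVec x = ∑ j, lam (e j) * c j ^ 2 := by
    conv_lhs => rw [← hc, pair_sum]
    refine Finset.sum_congr rfl fun j _ => ?_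
    rw [heig, dotProduct_smul, smul_eq_mul, hc, hxN]
    ring
  have hN : x ⬝ᵥ N.mulVec x = ∑ j, c j ^ 2 := by
    conv_lhs => rw [← hc, pair_sum]
    refine Finset.sum_congr rfl fun j _ => ?_
    rw [hc, hxN]; ring
  rw [hH, hN, Finset.mul_sum]
  exact Finset.sum_le_sum fun j _ => mul_le_mul_of_nonneg_right (hlo j) (sq_nonneg _)

lemma quad_upper {d m : ℕ} (N : Matrix (Fin d) (Fin d) ℝ) (sig : Fin d → ℝ)
    (u : Fin d → Fin d → ℝ)
    (hpos : ∀ i, 0 < sig i)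
    (heig : ∀ i, N.mulVec (u i) = (sig i)⁻¹ • u i)
    (horth : ∀ i j, u i ⬝ᵥ u j = if i = j then 1 else 0)
    (hi : ℝ) (e : Fin m → Fin d) (he : Function.Injective e) (hhi : ∀ j, sig (e j) ≤ hi)
    (x : Fin d → ℝ) (hx : x ∈ Submodule.span ℝ (Set.range (fun j => u (e j)))) :
    x ⬝ᵥ x ≤ hi * (x ⬝ᵥ N.mulVec x) := by
  obtain ⟨c, hc⟩ := (Submodule.mem_span_range_iff_exists_fun ℝ).mp hx
  have hxu : ∀ j, x ⬝ᵥ u (e j) = c j := by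
    intro j
    rw [← hc, sum_dot]
    simp only [horth]
    simp [he.eq_iff]
  have hN : x ⬝ᵥ N.mulVec x = ∑ j, (sig (e j))⁻¹ * c j ^ 2 := by
    conv_lhs => rw [← hc, pair_sum]
    refine Finset.sum_congr rfl fun j _ => ?_
    rw [heig, dotProduct_smul, smul_eq_mul, hc, hxu]
    ring
  have hX : x ⬝ᵥ x = ∑ j, c j ^ 2 := by
    conv_lhs => rw [← hc, sum_dot]
    refine Finset.sum_congr rfl fun j _ => ?_
    rw [hc, dotProduct_comm, hxu]; ring
  rw [hX, hN, Finset.mul_sum]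
  refine Finset.sum_le_sum fun j _ => ?_
  rw [← mul_assoc]
  nth_rewrite 1 [show c j ^ 2 = 1 * c j ^ 2 by ring]
  refine mul_le_mul_of_nonneg_right ?_ (sq_nonneg _)
  rw [← div_eq_mul_inv, le_div_iff₀ (hpos (e j)), one_mul]
  exact hhi j



lemma jacobian_mulVec {d n : ℕ} (f : (Fin d → ℝ) → (Fin n → ℝ)) (x w : Fin d → ℝ) :
    (jacobian d n f x).mulVec w = fun i => fderiv ℝ (fun y => f y i) x w := by
  funext i
  have hw : (∑ j, w j • (Pi.single j 1 : Fin d → ℝ)) = w := by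
    funext l
    simp [Pi.single_apply, Finset.sum_ite_eq']
  calc (jacobian d n f x).mulVec w i
      = ∑ j, w j • fderiv ℝ (fun y => f y i) x (Pi.single j 1) := by
        simp [jacobian, mulVec, dotProduct, mul_comm]
    _ = fderiv ℝ (fun y => f y i) x (∑ j, w j • (Pi.single j 1 : Fin d → ℝ)) := by
        rw [map_sum]
        exact Finset.sum_congr rfl fun j _ => ((fderiv ℝ (fun y => f y i) x).map_smul (w j) _).symm
    _ = _ := by rw [hw]

lemma jac_quad_le {d n : ℕ} (R : Matrix (Fin n) (Fin n) ℝ) (hR : R.PosDef)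
    (f : (Fin d → ℝ) → (Fin n → ℝ)) (hcd : ContDiff ℝ 1 f) (L : ℝ)
    (hlip : ∀ x y : Fin d → ℝ,
      Real.sqrt ((f x - f y) ⬝ᵥ R.mulVec (f x - f y)) ≤
        L * Real.sqrt ((x - y) ⬝ᵥ (x - y)))
    (x w : Fin d → ℝ) :
    w ⬝ᵥ ((jacobian d n f x)ᵀ * R * jacobian d n f x).mulVec w ≤ L ^ 2 * (w ⬝ᵥ w) := by
  set J := jacobian d n f x with hJ
  set g : Fin n → ℝ := J.mulVec w with hg
  -- reduce the quadratic form to Q g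
  have hquad : w ⬝ᵥ (Jᵀ * R * J).mulVec w = g ⬝ᵥ R.mulVec g := by
    rw [← Matrix.mulVec_mulVec, ← Matrix.mulVec_mulVec, Matrix.dotProduct_mulVec,
      Matrix.vecMul_transpose]
  rw [hquad]
  -- derivative of t ↦ f (x + t • w) at 0 is g
  have hder : HasDerivAt (fun t : ℝ => f (x + t • w)) g 0 := by
    rw [hasDerivAt_pi]
    intro i
    have hdi : DifferentiableAt ℝ (fun y => f y i) x :=
      ((contDiff_pi.mp hcd i).differentiable one_ne_zero).differentiableAt
    have hline : HasDerivAt (fun t : ℝ => x + t • w) w 0 := by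
      simpa using ((hasDerivAt_id (0:ℝ)).smul_const w).const_add x
    have := (show HasFDerivAt (fun y => f y i) (fderiv ℝ (fun y => f y i) x) (x + (0:ℝ) • w)
        by simpa using hdi.hasFDerivAt).comp_hasDerivAt (0:ℝ) hline
    have hgi : g i = fderiv ℝ (fun y => f y i) x w := by
      rw [hg, jacobian_mulVec]
    rw [hgi]
    exact this
  have hslope : Filter.Tendsto (slope (fun t : ℝ => f (x + t • w)) 0) (nhdsWithin 0 {(0:ℝ)}ᶜ)
      (nhds g) := hasDerivAt_iff_tendsto_slope.mp hder
  -- Q is continuous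
  have hQ : Continuous (fun y : Fin n → ℝ => y ⬝ᵥ R.mulVec y) := by
    simp only [dotProduct, mulVec]
    fun_prop
  have htend : Filter.Tendsto
      (fun t => (slope (fun t : ℝ => f (x + t • w)) 0 t) ⬝ᵥ
        R.mulVec (slope (fun t : ℝ => f (x + t • w)) 0 t))
      (nhdsWithin 0 {(0:ℝ)}ᶜ) (nhds (g ⬝ᵥ R.mulVec g)) :=
    (hQ.continuousAt.tendsto).comp hslope
  refine le_of_tendsto htend ?_
  refine Filter.eventually_of_mem self_mem_nhdsWithin fun t ht => ?_
  have ht0 : t ≠ 0 := by simpa using ht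
  -- bound on the slope quadratic form
  have hdelta : (f (x + t • w) - f x) ⬝ᵥ R.mulVec (f (x + t • w) - f x)
      ≤ L ^ 2 * (t ^ 2 * (w ⬝ᵥ w)) := by
    have h1 := hlip (x + t • w) x
    have h2 : (x + t • w - x) ⬝ᵥ (x + t • w - x) = t ^ 2 * (w ⬝ᵥ w) := by
      have : x + t • w - x = t • w := by abel
      rw [this, dotProduct_smul, smul_dotProduct]
      ring_nf
    rw [h2] at h1
    have hQnn : 0 ≤ (f (x + t • w) - f x) ⬝ᵥ R.mulVec (f (x + t • w) - f x) := by
      have := hR.posSemidef.dotProduct_mulVec_nonneg (f (x + t • w) - f x)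
      simpa using this
    have hww : (0:ℝ) ≤ w ⬝ᵥ w := by
      exact Finset.sum_nonneg fun i _ => mul_self_nonneg (w i)
    calc (f (x + t • w) - f x) ⬝ᵥ R.mulVec (f (x + t • w) - f x)
        = Real.sqrt ((f (x + t • w) - f x) ⬝ᵥ R.mulVec (f (x + t • w) - f x)) ^ 2 :=
          (Real.sq_sqrt hQnn).symm
      _ ≤ (L * Real.sqrt (t ^ 2 * (w ⬝ᵥ w))) ^ 2 := by
          apply sq_le_sq'
          · have := Real.sqrt_nonneg ((f (x + t • w) - f x) ⬝ᵥ R.mulVec (f (x + t • w) - f x))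
            linarith
          · exact h1
      _ = L ^ 2 * (t ^ 2 * (w ⬝ᵥ w)) := by
          rw [mul_pow, Real.sq_sqrt (by positivity)]
  -- slope value
  have hsl : slope (fun t : ℝ => f (x + t • w)) 0 t = t⁻¹ • (f (x + t • w) - f x) := by
    rw [slope_def_module]
    simp
  rw [hsl, Matrix.mulVec_smul, smul_dotProduct, dotProduct_smul]
  simp only [smul_eq_mul]
  rw [show t⁻¹ * (t⁻¹ * ((f (x + t • w) - f x) ⬝ᵥ R.mulVec (f (x + t • w) - f x)))
      = (t⁻¹)^2 * ((f (x + t • w) - f x) ⬝ᵥ R.mulVec (f (x + t • w) - f x)) by ring]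
  calc (t⁻¹)^2 * ((f (x + t • w) - f x) ⬝ᵥ R.mulVec (f (x + t • w) - f x))
      ≤ (t⁻¹)^2 * (L ^ 2 * (t ^ 2 * (w ⬝ᵥ w))) :=
        mul_le_mul_of_nonneg_left hdelta (sq_nonneg _)
    _ = L ^ 2 * (w ⬝ᵥ w) := by
        field_simp


lemma Hquad_le {d n : ℕ} (R : Matrix (Fin n) (Fin n) ℝ) (hR : R.PosDef)
    (f : (Fin d → ℝ) → (Fin n → ℝ)) (hcd : ContDiff ℝ 1 f) (L : ℝ)
    (hlip : ∀ x y : Fin d → ℝ,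
      Real.sqrt ((f x - f y) ⬝ᵥ R.mulVec (f x - f y)) ≤
        L * Real.sqrt ((x - y) ⬝ᵥ (x - y)))
    (μ : Measure (Fin d → ℝ)) [IsProbabilityMeasure μ]
    (hH : ∀ i j, Integrable
        (fun x => ((jacobian d n f x)ᵀ * R * jacobian d n f x) i j) μ)
    (w : Fin d → ℝ) :
    w ⬝ᵥ (Hmat d n f R μ).mulVec w ≤ L ^ 2 * (w ⬝ᵥ w) := by
  set M := fun x => ((jacobian d n f x)ᵀ * R * jacobian d n f x) with hM
  have h1 : ∀ (A : Matrix (Fin d) (Fin d) ℝ),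
      w ⬝ᵥ A.mulVec w = ∑ i, ∑ j, w i * w j * A i j := by
    intro A
    simp only [dotProduct, mulVec, Finset.mul_sum]
    exact Finset.sum_congr rfl fun i _ => Finset.sum_congr rfl fun j _ => by ring
  have hint : ∀ i j, Integrable (fun x => w i * w j * M x i j) μ :=
    fun i j => (hH i j).const_mul _
  have h2 : ∫ x, w ⬝ᵥ (M x).mulVec w ∂μ = w ⬝ᵥ (Hmat d n f R μ).mulVec w := by
    rw [h1]
    calc ∫ x, w ⬝ᵥ (M x).mulVec w ∂μ
        = ∫ x, ∑ i, ∑ j, w i * w j * M x i j ∂μ := by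
          congr 1; funext x; exact h1 (M x)
      _ = ∑ i, ∫ x, ∑ j, w i * w j * M x i j ∂μ :=
          integral_finset_sum _ fun i _ => integrable_finset_sum _ fun j _ => hint i j
      _ = ∑ i, ∑ j, ∫ x, w i * w j * M x i j ∂μ :=
          Finset.sum_congr rfl fun i _ => integral_finset_sum _ fun j _ => hint i j
      _ = ∑ i, ∑ j, w i * w j * Hmat d n f R μ i j := by
          refine Finset.sum_congr rfl fun i _ => Finset.sum_congr rfl fun j _ => ?_
          rw [integral_const_mul]
          rfl
  have hintQ : Integrable (fun x => w ⬝ᵥ (M x).mulVec w) μ := by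
    have := integrable_finset_sum (μ := μ) Finset.univ
      (fun i (_ : i ∈ Finset.univ) => integrable_finset_sum (f := fun j x => w i * w j * M x i j)
        Finset.univ (fun j _ => hint i j))
    rw [show (fun x => w ⬝ᵥ (M x).mulVec w) = fun x => ∑ i, ∑ j, w i * w j * M x i j from
      funext fun x => h1 (M x)]
    exact this
  rw [← h2]
  calc ∫ x, w ⬝ᵥ (M x).mulVec w ∂μ
      ≤ ∫ _, L ^ 2 * (w ⬝ᵥ w) ∂μ :=
        integral_mono hintQ (integrable_const _)
          (fun x => jac_quad_le R hR f hcd L hlip x w)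
    _ = L ^ 2 * (w ⬝ᵥ w) := by simp

/-- For the generalized eigenvalues `λ₁ ≥ … ≥ λ_d` of the pair `(H, Σ⁻¹)` with
`H = ∫ (∇f)ᵀ R_V (∇f) dμ` for a continuously differentiable `L`-Lipschitz `f`, and the
eigenvalues `σ₁² ≥ … ≥ σ_d²` of `Σ`, one has `∑_{i>r} λᵢ ≤ L² ∑_{i>r} σᵢ²` for all `r ≤ d`. -/
theorem sum_gen_eigenvalues_le (d n : ℕ)
    (S : Matrix (Fin d) (Fin d) ℝ) (hS : S.PosDef)
    (sig2 : Fin d → ℝ) (u : Fin d → (Fin d → ℝ))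
    (heigS : ∀ i, S.mulVec (u i) = sig2 i • u i)
    (horthu : ∀ i j, u i ⬝ᵥ u j = if i = j then 1 else 0)
    (hdecS : Antitone sig2)
    (R : Matrix (Fin n) (Fin n) ℝ) (hR : R.PosDef)
    (f : (Fin d → ℝ) → (Fin n → ℝ)) (hcd : ContDiff ℝ 1 f) (L : ℝ)
    (hlip : ∀ x y : Fin d → ℝ,
      Real.sqrt ((f x - f y) ⬝ᵥ R.mulVec (f x - f y)) ≤
        L * Real.sqrt ((x - y) ⬝ᵥ (x - y)))
    (μ : Measure (Fin d → ℝ)) [IsProbabilityMeasure μ]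
    (hH : ∀ i j, Integrable
        (fun x => ((jacobian d n f x)ᵀ * R * jacobian d n f x) i j) μ)
    (lam : Fin d → ℝ) (v : Fin d → (Fin d → ℝ))
    (heigH : ∀ i, (Hmat d n f R μ).mulVec (v i) = lam i • S⁻¹.mulVec (v i))
    (horthv : ∀ i j, v i ⬝ᵥ S⁻¹.mulVec (v j) = if i = j then 1 else 0)
    (hdecH : Antitone lam) :
    ∀ r : ℕ, r ≤ d →
      ∑ i ∈ Finset.univ.filter (fun i : Fin d => r ≤ (i : ℕ)), lam i ≤
        L ^ 2 * ∑ i ∈ Finset.univ.filter (fun i : Fin d => r ≤ (i : ℕ)), sig2 i := by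
  -- main proof
  -- Key claim: lam k ≤ L^2 * sig2 k for every k
  intro r hr
  have key : ∀ k : Fin d, lam k ≤ L ^ 2 * sig2 k := by
    intro k
    -- positivity of sig2
    have hune : ∀ i, u i ≠ 0 := by
      intro i hui
      have := horthu i i
      rw [hui] at this
      simpa using this
    have hsigpos : ∀ i, 0 < sig2 i := by
      intro i
      have h0 := hS.dotProduct_mulVec_pos (hune i)
      rw [heigS i] at h0
      simpa [dotProduct_smul, smul_eq_mul, horthu i i] using h0
    -- S⁻¹ eigen relation
    have hdet : IsUnit S.det := hS.det_pos.ne'.isUnit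
    have heigSinv : ∀ i, S⁻¹.mulVec (u i) = (sig2 i)⁻¹ • u i := by
      intro i
      have h1 : S⁻¹.mulVec (S.mulVec (u i)) = u i := by
        rw [Matrix.mulVec_mulVec, Matrix.nonsing_inv_mul S hdet, Matrix.one_mulVec]
      rw [heigS i, Matrix.mulVec_smul] at h1
      have := congrArg (fun z => (sig2 i)⁻¹ • z) h1
      simpa [smul_smul, inv_mul_cancel₀ (hsigpos i).ne'] using this
    -- embeddings
    set m1 : ℕ := (k : ℕ) + 1 with hm1
    set m2 : ℕ := d - (k : ℕ) with hm2
    have hkd := k.isLt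
    let e1 : Fin m1 → Fin d := fun j => ⟨j.1, by omega⟩
    let e2 : Fin m2 → Fin d := fun j => ⟨(k : ℕ) + j.1, by omega⟩
    have he1 : Function.Injective e1 := by
      intro a b hab
      have h : (e1 a).1 = (e1 b).1 := congrArg Fin.val hab
      exact Fin.ext (by simpa [e1] using h)
    have he2 : Function.Injective e2 := by
      intro a b hab
      have h : (e2 a).1 = (e2 b).1 := congrArg Fin.val hab
      simp only [e2] at h
      exact Fin.ext (by omega)
    -- linear independence
    have hliv : LinearIndependent ℝ (fun j => v (e1 j)) := by
      refine li_of_gram S⁻¹ _ fun i j => ?_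
      rw [horthv]
      simp [he1.eq_iff]
    have hliu : LinearIndependent ℝ (fun j => u (e2 j)) := by
      refine li_of_gram 1 _ fun i j => ?_
      rw [Matrix.one_mulVec, horthu]
      simp [he2.eq_iff]
    -- intersection
    obtain ⟨x, hx0, hxV, hxU⟩ := exists_common k _ _ hliv hliu
    -- estimates
    have hlow : lam k * (x ⬝ᵥ S⁻¹.mulVec x) ≤ x ⬝ᵥ (Hmat d n f R μ).mulVec x := by
      refine quad_lower (Hmat d n f R μ) S⁻¹ lam v heigH horthv (lam k) e1 he1
        (fun j => hdecH (by simp [e1, Fin.le_def]; omega)) x hxV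
    have hupp : x ⬝ᵥ x ≤ sig2 k * (x ⬝ᵥ S⁻¹.mulVec x) := by
      refine quad_upper S⁻¹ sig2 u hsigpos heigSinv horthu (sig2 k) e2 he2
        (fun j => hdecS (by simp [e2, Fin.le_def])) x hxU
    have hmid : x ⬝ᵥ (Hmat d n f R μ).mulVec x ≤ L ^ 2 * (x ⬝ᵥ x) :=
      Hquad_le R hR f hcd L hlip μ hH x
    have hq : 0 < x ⬝ᵥ S⁻¹.mulVec x := by
      have := hS.inv.dotProduct_mulVec_pos hx0
      simpa using this
    have hchain : lam k * (x ⬝ᵥ S⁻¹.mulVec x) ≤ (L ^ 2 * sig2 k) * (x ⬝ᵥ S⁻¹.mulVec x) := by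
      calc lam k * (x ⬝ᵥ S⁻¹.mulVec x) ≤ x ⬝ᵥ (Hmat d n f R μ).mulVec x := hlow
        _ ≤ L ^ 2 * (x ⬝ᵥ x) := hmid
        _ ≤ L ^ 2 * (sig2 k * (x ⬝ᵥ S⁻¹.mulVec x)) :=
            mul_le_mul_of_nonneg_left hupp (sq_nonneg L)
        _ = (L ^ 2 * sig2 k) * (x ⬝ᵥ S⁻¹.mulVec x) := by ring
    exact le_of_mul_le_mul_right hchain hq
  rw [Finset.mul_sum]
  exact Finset.sum_le_sum fun i _ => key i
end
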